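/- A Salomaa system of left-affine language equations has at most one solution: given n×n matrices of languages E_ij ⊆ GS with every string of each E_ij containing at least one action, guards B_ij ⊆ At pairwise disjoint in each row and disjoint from D_i ⊆ At, there is at most one function R : {1,…,n} → 2^GS satisfying R(i) = (⋃_j B_ij ⋄ E_ij ⋄ R(j)) ∪ D_i for all i. -/

import Mathlib

/-- A guarded string over actions `S` and atoms `A`: an initial atom followed by a
list of (action, atom) pairs, representing `α₀p₁α₁⋯pₙαₙ`. -/
abbrev GS (S A : Type*) := A × List (S × A)

variable {S A : Type*}

/-- The last atom of a guarded string. -/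
def lastAtom (x : GS S A) : A := ((x.2.map Prod.snd).getLast?).getD x.1

/-- Fusion product of languages of guarded strings:
`(xα) ⋄ (βy) = xαy` when `α = β`, undefined otherwise. -/
def fprod (L K : Set (GS S A)) : Set (GS S A) :=
  {z | ∃ x ∈ L, ∃ y ∈ K, lastAtom x = y.1 ∧ z = (x.1, x.2 ++ y.2)}

/-- A set of atoms viewed as the language of single-atom guarded strings. -/
def atomsL (B : Set A) : Set (GS S A) := {x | x.1 ∈ B ∧ x.2 = []}

/-- Powers of a language with respect to the fusion product: `L⁰ = At`, `L^{n+1} = Lⁿ ⋄ L`. -/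
def fpow (L : Set (GS S A)) : ℕ → Set (GS S A)
  | 0 => atomsL Set.univ
  | n + 1 => fprod (fpow L n) L

/-- Guarded union: `L +_B K = (B ⋄ L) ∪ (B̄ ⋄ K)`. -/
def gunion (L K : Set (GS S A)) (B : Set A) : Set (GS S A) :=
  fprod (atomsL B) L ∪ fprod (atomsL Bᶜ) K

/-- Guarded iteration: `L^(B) = ⋃_{n≥0} (B ⋄ L)ⁿ ⋄ B̄`. -/
def gloop (L : Set (GS S A)) (B : Set A) : Set (GS S A) :=
  ⋃ n : ℕ, fprod (fpow (fprod (atomsL B) L) n) (atomsL Bᶜ)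

open scoped symmDiff

/-- The minimal number of action symbols in a string of `C` (`∞` if `C = ∅`). -/
noncomputable def gsnorm {S A : Type*} (C : Set (GS S A)) : ℕ∞ :=
  ⨅ x ∈ C, (x.2.length : ℕ∞)

/-- `2^{-m}`, with `2^{-∞} = 0`. -/
noncomputable def pow2neg (m : ℕ∞) : ℝ :=
  if m = ⊤ then 0 else (2 : ℝ) ^ (-((WithTop.untopD 0 m : ℕ) : ℤ))

/-- The metric `d(X,Y) = 2^{-‖X △ Y‖}` on languages of guarded strings. -/
noncomputable def gdist {S A : Type*} (X Y : Set (GS S A)) : ℝ :=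
  pow2neg (gsnorm (X ∆ Y))

/-!
Two solutions agree on all strings with fewer than `m` actions, by induction on `m`: if they
agree below `m`, then, since every string of `E i j` contributes at least one action, the
right-hand sides of the system agree below `m + 1`. This is the contractivity of the system
map in the metric `d(X,Y) = 2^{-‖X △ Y‖}`, phrased without the metric.
-/

open Set

/-- `AgreeBelow m X Y` says `d(X, Y) ≤ 2^{-m}`. -/
def AgreeBelow (m : ℕ) (X Y : Set (GS S A)) : Prop :=
  ∀ x : GS S A, x.2.length < m → (x ∈ X ↔ x ∈ Y)

theorem agreeBelow_zero (X Y : Set (GS S A)) : AgreeBelow 0 X Y :=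
  fun _ hx => absurd hx (Nat.not_lt_zero _)

theorem eq_of_forall_agreeBelow {X Y : Set (GS S A)} (h : ∀ m, AgreeBelow m X Y) : X = Y :=
  ext fun x => h (x.2.length + 1) x (Nat.lt_succ_self _)

namespace AgreeBelow

variable {m : ℕ} {X Y : Set (GS S A)}

theorem symm (h : AgreeBelow m X Y) : AgreeBelow m Y X :=
  fun x hx => (h x hx).symm

theorem iUnion {ι : Type*} {X Y : ι → Set (GS S A)} (h : ∀ i, AgreeBelow m (X i) (Y i)) :
    AgreeBelow m (⋃ i, X i) (⋃ i, Y i) :=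
  fun x hx => by simp only [mem_iUnion, h _ x hx]

theorem union_right (h : AgreeBelow m X Y) (Z : Set (GS S A)) :
    AgreeBelow m (X ∪ Z) (Y ∪ Z) :=
  fun x hx => by simp only [mem_union, h x hx]

theorem fprod_left {k : ℕ} {L : Set (GS S A)} (hL : ∀ x ∈ L, k ≤ x.2.length)
    (h : AgreeBelow m X Y) : AgreeBelow (m + k) (fprod L X) (fprod L Y) := by
  suffices hsub : ∀ {X Y : Set (GS S A)}, AgreeBelow m X Y →
      ∀ z, z.2.length < m + k → z ∈ fprod L X → z ∈ fprod L Y from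
    fun z hz => ⟨hsub h z hz, hsub h.symm z hz⟩
  rintro X Y h _ hz ⟨x, hx, y, hy, hxy, rfl⟩
  have hy_short : y.2.length < m := by
    have := hL x hx
    simp only [List.length_append] at hz
    omega
  exact ⟨x, hx, y, (h y hy_short).mp hy, hxy, rfl⟩

theorem fprod_atomsL (B : Set A) (h : AgreeBelow m X Y) :
    AgreeBelow m (fprod (atomsL B) X) (fprod (atomsL B) Y) :=
  h.fprod_left (k := 0) fun _ _ => Nat.zero_le _

end AgreeBelow

theorem salomaa_system_unique_solution_general {S A : Type*}
    {n : ℕ}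
    (E : Fin n → Fin n → Set (GS S A))
    (B : Fin n → Fin n → Set A) (D : Fin n → Set A)
    (hE : ∀ i j, ∀ x ∈ E i j, x.2 ≠ [])
    (R R' : Fin n → Set (GS S A))
    (hR : ∀ i, R i = (⋃ j, fprod (atomsL (B i j)) (fprod (E i j) (R j))) ∪ atomsL (D i))
    (hR' : ∀ i, R' i = (⋃ j, fprod (atomsL (B i j)) (fprod (E i j) (R' j))) ∪ atomsL (D i)) :
    R = R' := by
  have hE_pos : ∀ i j, ∀ x ∈ E i j, 1 ≤ x.2.length :=
    fun i j x hx => List.length_pos_iff.mpr (hE i j x hx)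
  have agree : ∀ m i, AgreeBelow m (R i) (R' i) := by
    intro m
    induction m with
    | zero => exact fun i => agreeBelow_zero _ _
    | succ m ih =>
      intro i
      rw [hR i, hR' i]
      exact (AgreeBelow.iUnion fun j =>
        ((ih j).fprod_left (hE_pos i j)).fprod_atomsL (B i j)).union_right _
  funext i
  exact eq_of_forall_agreeBelow (agree · i)

theorem salomaa_system_unique_solution {S A : Type*}
    [Fintype S] [Fintype A] [Nonempty S] [Nonempty A] {n : ℕ}
    (E : Fin n → Fin n → Set (GS S A))
    (B : Fin n → Fin n → Set A) (D : Fin n → Set A)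
    (hE : ∀ i j, ∀ x ∈ E i j, x.2 ≠ [])
    (hB : ∀ i j k, j ≠ k → B i j ∩ B i k = ∅)
    (hBD : ∀ i j, B i j ∩ D i = ∅)
    (R R' : Fin n → Set (GS S A))
    (hR : ∀ i, R i = (⋃ j, fprod (atomsL (B i j)) (fprod (E i j) (R j))) ∪ atomsL (D i))
    (hR' : ∀ i, R' i = (⋃ j, fprod (atomsL (B i j)) (fprod (E i j) (R' j))) ∪ atomsL (D i)) :
    R = R' :=
  salomaa_system_unique_solution_general E B D hE R R' hR hR'
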